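/- For v > -1 real and nonnegative integer n, the terminating ₂F₁ identity ₂F₁(-n/2, -n/2+1/2; v+3/2; 1/c²) = ((√(c²-1))/c)^n · (n! Γ(2v+2)/Γ(n+2v+2)) · C^{v+1}_n(c/√(c²-1)) holds for all real c > 1. -/

import Mathlib

open Finset

/-- Pochhammer (rising factorial) `(a)_k`. -/
noncomputable def poch (a : ℝ) (k : ℕ) : ℝ := ∏ i ∈ Finset.range k, (a + i)

/-- Gegenbauer polynomial `C^λ_n(z)`. -/
noncomputable def gegenbauer (ρ : ℝ) (n : ℕ) (z : ℝ) : ℝ :=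
  ∑ k ∈ Finset.range (n / 2 + 1),
    (-1 : ℝ) ^ k * Real.Gamma (ρ + n - k) /
      (Real.Gamma ρ * k.factorial * (n - 2 * k).factorial) * (2 * z) ^ (n - 2 * k)

/-- The terminating hypergeometric polynomial
`₂F₁(-n/2, (1-n)/2; c; x)` (a polynomial of degree `⌊n/2⌋` in `x`). -/
noncomputable def F21half (n : ℕ) (c x : ℝ) : ℝ :=
  ∑ k ∈ Finset.range (n / 2 + 1),
    poch (-(n : ℝ) / 2) k * poch ((1 - (n : ℝ)) / 2) k / (poch c k * k.factorial) * x ^ k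

/-!
Write `λ = v + 1`, `x = 1 / c²` and `s = √(c² - 1)`. Since `(s / c)² = 1 - x`, the factor
`(s / c)ⁿ` turns the Gegenbauer sum `∑ₖ aₖ (2c / s)ⁿ⁻²ᵏ` into `∑ₖ aₖ 2ⁿ⁻²ᵏ (1 - x)ᵏ`.
Expanding `(1 - x)ᵏ` binomially, the coefficient of `xʲ` is `(λ)ⱼ / j! · C^{λ+j}_{n-2j}(1)`,
and `C^μ_m(1) = (2μ)ₘ / m!` follows from a telescoping (Zeilberger) recurrence in `m`.
The duplication formula `(2λ)₂ⱼ = 4ʲ (λ)ⱼ (λ + 1/2)ⱼ` together with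
`(-n/2)ⱼ ((1-n)/2)ⱼ = 4⁻ʲ n! / (n - 2j)!` then matches the coefficients of the ₂F₁.
-/

lemma poch_zero (a : ℝ) : poch a 0 = 1 := prod_range_zero _

lemma poch_succ (a : ℝ) (k : ℕ) : poch a (k + 1) = poch a k * (a + k) := prod_range_succ _ _

lemma poch_add (a : ℝ) (r t : ℕ) : poch a (r + t) = poch a r * poch (a + r) t := by
  simp only [poch, prod_range_add, Nat.cast_add, add_assoc]

lemma poch_pos {a : ℝ} (ha : 0 < a) (k : ℕ) : 0 < poch a k :=
  prod_pos fun _ _ => by positivity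

lemma Gamma_add_nat_eq_mul_poch {a : ℝ} (ha : 0 < a) (k : ℕ) :
    Real.Gamma (a + k) = Real.Gamma a * poch a k := by
  induction k with
  | zero => simp [poch_zero]
  | succ k ih =>
    rw [Nat.cast_succ, ← add_assoc, Real.Gamma_add_one (by positivity), ih, poch_succ]
    ring

lemma poch_two_mul_two_mul (a : ℝ) (j : ℕ) :
    poch (2 * a) (2 * j) = 4 ^ j * poch a j * poch (a + 1 / 2) j := by
  induction j with
  | zero => simp [poch_zero]
  | succ j ih =>
    rw [Nat.mul_succ, poch_succ, poch_succ, ih, poch_succ, poch_succ]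
    push_cast
    ring

lemma poch_neg_natCast (n m : ℕ) : poch (-n) m = (-1) ^ m * n.descFactorial m := by
  induction m with
  | zero => simp [poch_zero]
  | succ m ih =>
    rw [poch_succ, ih, Nat.descFactorial_succ]
    rcases le_or_gt m n with h | h
    · push_cast [h]
      ring
    · simp [Nat.descFactorial_eq_zero_iff_lt.2 h]

noncomputable def gegenbauerCoeff (l : ℝ) (M i : ℕ) : ℝ :=
  (-1) ^ i * poch l (M - i) * 2 ^ (M - 2 * i) / (i.factorial * (M - 2 * i).factorial)

noncomputable def gegenbauerAtOne (l : ℝ) (M : ℕ) : ℝ :=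
  ∑ i ∈ range (M / 2 + 1), gegenbauerCoeff l M i

/-- Zeilberger certificate: `(M + 1) a (M + 1) i - (2 l + M) a M i = t i - t (i + 1)` for the
coefficients `a = gegenbauerCoeff l`, so the recurrence `gegenbauerAtOne_succ` telescopes. -/
noncomputable def gegenbauerCert (l : ℝ) (M i : ℕ) : ℝ :=
  (-1) ^ i * poch l (M + 1 - i) * 2 ^ (M + 2 - 2 * i) * i /
    (i.factorial * (M + 1 - 2 * i).factorial)

lemma gegenbauerCoeff_succ_sub {l : ℝ} {M i : ℕ} (h : 2 * i < M) :
    ((M : ℝ) + 1) * gegenbauerCoeff l (M + 1) i - (2 * l + M) * gegenbauerCoeff l M i =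
      gegenbauerCert l M i - gegenbauerCert l M (i + 1) := by
  obtain ⟨b, rfl⟩ : ∃ b, M = 2 * i + b + 1 := ⟨M - 2 * i - 1, by omega⟩
  have e1 : 2 * i + b + 1 - i = i + b + 1 := by omega
  have e2 : 2 * i + b + 1 + 1 - i = i + b + 1 + 1 := by omega
  have e3 : 2 * i + b + 1 - 2 * i = b + 1 := by omega
  have e4 : 2 * i + b + 1 + 1 - 2 * i = b + 2 := by omega
  have e5 : 2 * i + b + 1 + 1 - (i + 1) = i + b + 1 := by omega
  have e6 : 2 * i + b + 1 + 2 - 2 * i = b + 3 := by omega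
  have e7 : 2 * i + b + 1 + 1 - 2 * (i + 1) = b := by omega
  have e8 : 2 * i + b + 1 + 2 - 2 * (i + 1) = b + 1 := by omega
  simp only [gegenbauerCoeff, gegenbauerCert, e1, e2, e3, e4, e5, e6, e7, e8, poch_succ,
    Nat.factorial_succ, pow_succ]
  push_cast
  field_simp
  ring

lemma gegenbauerCoeff_succ_sub_top_even (l : ℝ) (i : ℕ) :
    (((2 * i : ℕ) : ℝ) + 1) * gegenbauerCoeff l (2 * i + 1) i -
      (2 * l + (2 * i : ℕ)) * gegenbauerCoeff l (2 * i) i = gegenbauerCert l (2 * i) i := by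
  have e1 : 2 * i - i = i := by omega
  have e2 : 2 * i + 1 - i = i + 1 := by omega
  have e3 : 2 * i + 2 - 2 * i = 2 := by omega
  simp only [gegenbauerCoeff, gegenbauerCert, e1, e2, e3, Nat.sub_self, Nat.add_sub_cancel_left,
    poch_succ, Nat.factorial_one, Nat.factorial_zero]
  push_cast
  field_simp
  ring

lemma gegenbauerCoeff_succ_top_odd (l : ℝ) (i : ℕ) :
    (((2 * i + 1 : ℕ) : ℝ) + 1) * gegenbauerCoeff l (2 * i + 1 + 1) (i + 1) =
      gegenbauerCert l (2 * i + 1) (i + 1) := by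
  have e1 : 2 * i + 1 + 1 - (i + 1) = i + 1 := by omega
  have e2 : 2 * i + 1 + 1 - 2 * (i + 1) = 0 := by omega
  have e3 : 2 * i + 1 + 2 - 2 * (i + 1) = 1 := by omega
  simp only [gegenbauerCoeff, gegenbauerCert, e1, e2, e3, Nat.factorial_zero]
  push_cast
  field_simp
  ring

lemma gegenbauerAtOne_succ (l : ℝ) (M : ℕ) :
    ((M : ℝ) + 1) * gegenbauerAtOne l (M + 1) = (2 * l + M) * gegenbauerAtOne l M := by
  have hcert0 : gegenbauerCert l M 0 = 0 := by simp [gegenbauerCert]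
  rw [← sub_eq_zero, gegenbauerAtOne, gegenbauerAtOne, mul_sum, mul_sum]
  obtain ⟨m, rfl | rfl⟩ := Nat.even_or_odd' M
  · rw [show (2 * m + 1) / 2 = m by omega, show 2 * m / 2 = m by omega, ← sum_sub_distrib,
      sum_range_succ, gegenbauerCoeff_succ_sub_top_even,
      sum_congr rfl fun i hi => gegenbauerCoeff_succ_sub (by simp at hi; omega),
      sum_range_sub', hcert0]
    ring
  · rw [show (2 * m + 1 + 1) / 2 = m + 1 by omega, show (2 * m + 1) / 2 = m by omega,
      sum_range_succ _ (m + 1), add_sub_right_comm, ← sum_sub_distrib,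
      sum_congr rfl fun i hi => gegenbauerCoeff_succ_sub (by simp at hi; omega),
      sum_range_sub', gegenbauerCoeff_succ_top_odd, hcert0]
    ring

lemma gegenbauerAtOne_eq (l : ℝ) (M : ℕ) :
    gegenbauerAtOne l M = poch (2 * l) M / M.factorial := by
  induction M with
  | zero => simp [gegenbauerAtOne, gegenbauerCoeff, poch_zero]
  | succ M ih =>
    apply mul_left_cancel₀ (by positivity : (M : ℝ) + 1 ≠ 0)
    rw [gegenbauerAtOne_succ, ih, poch_succ, Nat.factorial_succ]
    push_cast
    field_simp

lemma gegenbauer_eq_sum_gegenbauerCoeff {ρ : ℝ} (hρ : 0 < ρ) (n : ℕ) (z : ℝ) :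
    gegenbauer ρ n z = ∑ k ∈ range (n / 2 + 1), gegenbauerCoeff ρ n k * z ^ (n - 2 * k) := by
  refine sum_congr rfl fun k hk => ?_
  have hkn : k ≤ n := by simp at hk; omega
  have hΓ : Real.Gamma ρ ≠ 0 := (Real.Gamma_pos_of_pos hρ).ne'
  rw [show ρ + n - k = ρ + ((n - k : ℕ) : ℝ) by push_cast [hkn]; ring,
    Gamma_add_nat_eq_mul_poch hρ, gegenbauerCoeff, mul_pow]
  field_simp

lemma choose_mul_gegenbauerCoeff (l : ℝ) {n j i : ℕ} (h : 2 * (j + i) ≤ n) :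
    ((j + i).choose j : ℝ) * gegenbauerCoeff l n (j + i) =
      (-1) ^ j * poch l j / j.factorial * gegenbauerCoeff (l + j) (n - 2 * j) i := by
  have hchoose : ((j + i).choose j : ℝ) * j.factorial * i.factorial = (j + i).factorial := by
    have := Nat.choose_mul_factorial_mul_factorial (Nat.le_add_right j i)
    rw [Nat.add_sub_cancel_left] at this
    exact_mod_cast this
  have hchoose_pos : 0 < ((j + i).choose j : ℝ) := by
    exact_mod_cast Nat.choose_pos (Nat.le_add_right j i)
  rw [gegenbauerCoeff, gegenbauerCoeff, show n - (j + i) = j + (n - 2 * j - i) by omega,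
    show n - 2 * (j + i) = n - 2 * j - 2 * i by omega, poch_add, ← hchoose, pow_add]
  field_simp

lemma sum_choose_mul_gegenbauerCoeff (l : ℝ) {n j : ℕ} (hj : 2 * j ≤ n) :
    ∑ k ∈ range (n / 2 + 1), (k.choose j : ℝ) * gegenbauerCoeff l n k =
      (-1) ^ j * poch l j / j.factorial * gegenbauerAtOne (l + j) (n - 2 * j) := by
  have hlow : ∑ k ∈ range j, (k.choose j : ℝ) * gegenbauerCoeff l n k = 0 :=
    sum_eq_zero fun k hk => by simp [Nat.choose_eq_zero_of_lt (mem_range.1 hk)]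
  rw [show n / 2 + 1 = j + ((n - 2 * j) / 2 + 1) by omega, sum_range_add, hlow, zero_add,
    gegenbauerAtOne, mul_sum]
  exact sum_congr rfl fun i hi => choose_mul_gegenbauerCoeff l (by simp at hi; omega)

lemma sum_gegenbauerCoeff_mul_one_sub_pow (l : ℝ) (n : ℕ) (x : ℝ) :
    ∑ k ∈ range (n / 2 + 1), gegenbauerCoeff l n k * (1 - x) ^ k =
      ∑ j ∈ range (n / 2 + 1),
        poch l j / j.factorial * gegenbauerAtOne (l + j) (n - 2 * j) * x ^ j := by
  have hbinom : ∀ k ∈ range (n / 2 + 1),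
      (1 - x) ^ k = ∑ j ∈ range (n / 2 + 1), (-x) ^ j * (k.choose j : ℝ) := by
    intro k hk
    rw [sub_eq_neg_add, add_pow]
    simp only [one_pow, mul_one]
    apply sum_subset (range_subset_range.2 (mem_range.1 hk))
    · intro j _ hj
      simp [Nat.choose_eq_zero_of_lt (not_lt.1 (mem_range.not.1 hj))]
  rw [sum_congr rfl fun k hk => congrArg _ (hbinom k hk)]
  simp_rw [mul_sum]
  rw [sum_comm]
  refine sum_congr rfl fun j hj => ?_
  have hsign : ((-1 : ℝ) ^ j) * (-1) ^ j = 1 := by rw [← mul_pow]; norm_num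
  have hfactor :
      ∑ k ∈ range (n / 2 + 1), gegenbauerCoeff l n k * ((-x) ^ j * (k.choose j : ℝ)) =
        (-x) ^ j * ∑ k ∈ range (n / 2 + 1), (k.choose j : ℝ) * gegenbauerCoeff l n k := by
    rw [mul_sum]
    exact sum_congr rfl fun k _ => by ring
  rw [hfactor, sum_choose_mul_gegenbauerCoeff l (by simp at hj; omega), neg_pow]
  linear_combination (poch l j / j.factorial * gegenbauerAtOne (l + j) (n - 2 * j) * x ^ j) * hsign

lemma pow_mul_sum_mul_inv_pow {t : ℝ} (ht : t ≠ 0) (n : ℕ) (a : ℕ → ℝ) :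
    t ^ n * ∑ k ∈ range (n / 2 + 1), a k * t⁻¹ ^ (n - 2 * k) =
      ∑ k ∈ range (n / 2 + 1), a k * (t ^ 2) ^ k := by
  rw [mul_sum]
  refine sum_congr rfl fun k hk => ?_
  rw [inv_pow, pow_sub₀ t ht (by simp at hk; omega : 2 * k ≤ n), ← pow_mul]
  field_simp

lemma factorial_div_poch_mul_gegenbauerAtOne {l : ℝ} (hl : 0 < l) {n j : ℕ}
    (hj : 2 * j ≤ n) :
    n.factorial / poch (2 * l) n * (poch l j / j.factorial * gegenbauerAtOne (l + j) (n - 2 * j)) =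
      poch (-(n : ℝ) / 2) j * poch ((1 - (n : ℝ)) / 2) j / (poch (l + 1 / 2) j * j.factorial) := by
  have hnum : 4 ^ j * (poch (-(n : ℝ) / 2) j * poch ((1 - (n : ℝ)) / 2) j) =
      n.descFactorial (2 * j) := by
    have h := poch_two_mul_two_mul (-(n : ℝ) / 2) j
    rw [show 2 * (-(n : ℝ) / 2) = -n by ring, show -(n : ℝ) / 2 + 1 / 2 = (1 - n) / 2 by ring,
      poch_neg_natCast, pow_mul, neg_one_sq, one_pow, one_mul] at h
    rw [h, mul_assoc]
  have hden : poch (2 * l) n =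
      4 ^ j * poch l j * poch (l + 1 / 2) j * poch (2 * (l + j)) (n - 2 * j) := by
    conv_lhs => rw [← Nat.add_sub_cancel' hj, poch_add]
    rw [poch_two_mul_two_mul, show 2 * l + ((2 * j : ℕ) : ℝ) = 2 * (l + j) by push_cast; ring]
  have hfact : ((n - 2 * j).factorial : ℝ) * n.descFactorial (2 * j) = n.factorial := by
    exact_mod_cast Nat.factorial_mul_descFactorial hj
  have h1 := poch_pos hl j
  have h2 := poch_pos (by positivity : 0 < l + 1 / 2) j
  have h3 := poch_pos (by positivity : 0 < 2 * (l + j)) (n - 2 * j)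
  rw [gegenbauerAtOne_eq, hden, ← hfact, ← hnum]
  field_simp

theorem stmt18 (v : ℝ) (hv : -1 < v) (n : ℕ) (c : ℝ) (hc : 1 < c) :
    F21half n (v + 3 / 2) (1 / c ^ 2) =
      (Real.sqrt (c ^ 2 - 1) / c) ^ n *
        ((n.factorial : ℝ) * Real.Gamma (2 * v + 2) / Real.Gamma ((n : ℝ) + 2 * v + 2)) *
        gegenbauer (v + 1) n (c / Real.sqrt (c ^ 2 - 1)) := by
  have hl : 0 < v + 1 := by linarith
  have hc2 : 0 < c ^ 2 - 1 := by nlinarith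
  have hs : 0 < Real.sqrt (c ^ 2 - 1) := Real.sqrt_pos.2 hc2
  have hΓ :
      Real.Gamma ((n : ℝ) + 2 * v + 2) = poch (2 * (v + 1)) n * Real.Gamma (2 * v + 2) := by
    rw [show (n : ℝ) + 2 * v + 2 = 2 * (v + 1) + n by ring, show 2 * v + 2 = 2 * (v + 1) by ring,
      Gamma_add_nat_eq_mul_poch (by linarith), mul_comm]
  have hscale : (Real.sqrt (c ^ 2 - 1) / c) ^ 2 = 1 - 1 / c ^ 2 := by
    rw [div_pow, Real.sq_sqrt hc2.le]
    field_simp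
  rw [hΓ, mul_div_mul_right _ _ (Real.Gamma_pos_of_pos (by linarith)).ne',
    gegenbauer_eq_sum_gegenbauerCoeff hl, ← inv_div (Real.sqrt _) c, mul_right_comm,
    pow_mul_sum_mul_inv_pow (by positivity), hscale, sum_gegenbauerCoeff_mul_one_sub_pow,
    F21half, mul_comm, mul_sum]
  refine sum_congr rfl fun j hj => ?_
  rw [← mul_assoc, factorial_div_poch_mul_gegenbauerAtOne hl (by simp at hj; omega),
    show v + 1 + 1 / 2 = v + 3 / 2 by ring]
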